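/- Fix n ≥ 1 and define softmax : ℝ^n → ℝ^n by softmax(x)_i = exp(x_i) / Σ_{j=1}^{n} exp(x_j). Then softmax is 1-Lipschitz with respect to the Euclidean norm: ‖softmax(x) − softmax(y)‖₂ ≤ ‖x − y‖₂ for all x, y ∈ ℝ^n. -/

import Mathlib

/-!
The Jacobian of softmax at `x` is `diag p - p pᵀ` with `p = softmax x` a probability vector, so
`(J v)ᵢ = pᵢ (vᵢ - ⟪p, v⟫)`. Since `0 ≤ pᵢ ≤ 1`,
`‖J v‖² ≤ ∑ pᵢ (vᵢ - ⟪p, v⟫)² = ∑ pᵢ vᵢ² - ⟪p, v⟫² ≤ ‖v‖²`,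
so `‖J‖ ≤ 1` everywhere and the mean value inequality on the convex space `ℝⁿ` concludes.
-/

open Finset Matrix

noncomputable def softmax {n : ℕ} (x : EuclideanSpace ℝ (Fin n)) : EuclideanSpace ℝ (Fin n) :=
  WithLp.toLp 2 (fun i => Real.exp (x i) / ∑ j, Real.exp (x j))

section ProbabilityVector

variable {ι : Type*} [Fintype ι] {p : ι → ℝ}

lemma sum_mul_sq_sub_dotProduct (hp : ∑ i, p i = 1) (v : ι → ℝ) :
    ∑ i, p i * (v i - p ⬝ᵥ v) ^ 2 = ∑ i, p i * v i ^ 2 - (p ⬝ᵥ v) ^ 2 := by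
  have expand : ∀ i, p i * (v i - p ⬝ᵥ v) ^ 2
      = p i * v i ^ 2 - 2 * (p ⬝ᵥ v) * (p i * v i) + (p ⬝ᵥ v) ^ 2 * p i := fun i => by ring
  have hmean : ∑ i, p i * v i = p ⬝ᵥ v := rfl
  simp only [expand, sum_add_distrib, sum_sub_distrib, ← mul_sum, hp, hmean]
  ring

lemma sum_sq_mul_sub_dotProduct_le (hp0 : ∀ i, 0 ≤ p i) (hp1 : ∑ i, p i = 1) (v : ι → ℝ) :
    ∑ i, (p i * (v i - p ⬝ᵥ v)) ^ 2 ≤ ∑ i, v i ^ 2 := by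
  have hp_le_one : ∀ i, p i ≤ 1 := fun i =>
    hp1 ▸ single_le_sum (fun j _ => hp0 j) (mem_univ i)
  calc ∑ i, (p i * (v i - p ⬝ᵥ v)) ^ 2 ≤ ∑ i, p i * (v i - p ⬝ᵥ v) ^ 2 := by
        gcongr with i
        rw [mul_pow, sq (p i), mul_assoc]
        exact mul_le_of_le_one_left (mul_nonneg (hp0 i) (sq_nonneg _)) (hp_le_one i)
    _ = ∑ i, p i * v i ^ 2 - (p ⬝ᵥ v) ^ 2 := sum_mul_sq_sub_dotProduct hp1 v
    _ ≤ ∑ i, p i * v i ^ 2 := sub_le_self _ (sq_nonneg _)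
    _ ≤ ∑ i, v i ^ 2 := by
        gcongr with i
        exact mul_le_of_le_one_left (sq_nonneg _) (hp_le_one i)

variable [DecidableEq ι]

noncomputable def softmaxJacobian (p : ι → ℝ) : EuclideanSpace ℝ ι →L[ℝ] EuclideanSpace ℝ ι :=
  toEuclideanCLM (𝕜 := ℝ) (diagonal p - vecMulVec p p)

lemma softmaxJacobian_apply (p : ι → ℝ) (v : EuclideanSpace ℝ ι) (i : ι) :
    softmaxJacobian p v i = p i * (v i - p ⬝ᵥ v) := by
  simp only [softmaxJacobian, map_sub, _root_.sub_apply, PiLp.sub_apply,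
    ofLp_toEuclideanCLM, mulVec_diagonal, vecMulVec_mulVec, Pi.smul_apply,
    MulOpposite.smul_eq_mul_unop, MulOpposite.unop_op]
  ring

lemma norm_softmaxJacobian_le_one (hp0 : ∀ i, 0 ≤ p i) (hp1 : ∑ i, p i = 1) :
    ‖softmaxJacobian p‖ ≤ 1 := by
  refine ContinuousLinearMap.opNorm_le_bound _ zero_le_one fun v => ?_
  rw [one_mul, EuclideanSpace.norm_eq, EuclideanSpace.norm_eq]
  apply Real.sqrt_le_sqrt
  simpa only [softmaxJacobian_apply, Real.norm_eq_abs, sq_abs]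
    using sum_sq_mul_sub_dotProduct_le hp0 hp1 v

end ProbabilityVector

section Softmax

variable {n : ℕ}

lemma sum_exp_pos [NeZero n] (x : EuclideanSpace ℝ (Fin n)) : 0 < ∑ j, Real.exp (x j) :=
  sum_pos (fun _ _ => Real.exp_pos _) univ_nonempty

lemma softmax_nonneg (x : EuclideanSpace ℝ (Fin n)) (i : Fin n) : 0 ≤ softmax x i :=
  div_nonneg (Real.exp_pos _).le (sum_nonneg fun _ _ => (Real.exp_pos _).le)

lemma sum_softmax [NeZero n] (x : EuclideanSpace ℝ (Fin n)) : ∑ i, softmax x i = 1 := by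
  simp only [softmax, PiLp.toLp_apply, ← sum_div]
  exact div_self (sum_exp_pos x).ne'

lemma hasFDerivAt_softmax [NeZero n] (x : EuclideanSpace ℝ (Fin n)) :
    HasFDerivAt softmax (softmaxJacobian (softmax x).ofLp) x := by
  rw [← hasFDerivWithinAt_univ, hasFDerivWithinAt_piLp]
  intro i
  have hexp : ∀ j, HasFDerivAt (fun y : EuclideanSpace ℝ (Fin n) => Real.exp (y j))
      (Real.exp (x j) • PiLp.proj 2 (fun _ => ℝ) j) x :=
    fun j => (PiLp.hasFDerivAt_apply 2 x j).exp
  have hS := (sum_exp_pos x).ne'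
  have hinv := (hasDerivAt_inv hS).comp_hasFDerivAt x (HasFDerivAt.fun_sum fun j _ => hexp j)
  have hcomponent : (fun y : EuclideanSpace ℝ (Fin n) => softmax y i) =
      fun y => Real.exp (y i) * (∑ j, Real.exp (y j))⁻¹ := rfl
  rw [hcomponent]
  refine ((hexp i).mul hinv).hasFDerivWithinAt.congr_fderiv ?_
  ext v
  rw [ContinuousLinearMap.comp_apply, PiLp.proj_apply, softmaxJacobian_apply]
  simp only [softmax, dotProduct, div_mul_eq_mul_div, ← sum_div, neg_smul, smul_neg,
    Function.comp_apply, _root_.add_apply, _root_.neg_apply, _root_.smul_apply, _root_.sum_apply,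
    PiLp.proj_apply, smul_eq_mul, PiLp.toLp_apply]
  field_simp
  ring

end Softmax

/-- For `n ≥ 1`, softmax is 1-Lipschitz with respect to the Euclidean norm. -/
theorem softmax_lipschitz (n : ℕ) (hn : 1 ≤ n) :
    ∀ x y : EuclideanSpace ℝ (Fin n), ‖softmax x - softmax y‖ ≤ ‖x - y‖ := by
  have : NeZero n := NeZero.of_pos hn
  intro x y
  simpa using convex_univ.norm_image_sub_le_of_norm_hasFDerivWithin_le
    (fun z _ => (hasFDerivAt_softmax z).hasFDerivWithinAt)
    (fun z _ => norm_softmaxJacobian_le_one (softmax_nonneg z) (sum_softmax z))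
    (Set.mem_univ y) (Set.mem_univ x)
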